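/- arXiv:2302.11620 — 5 statements merged into one kernel-verified Lean document; each statement's English description precedes it below -/
import Mathlib

section
/- Consider the commutative triple T = (k[x], k[x²], ι) where ι : k[x²] → k[x] is the inclusion. The k-linear map D : k[x²] ⊗ k[x] → k[x] defined by D(g ⊗ h) = g·h' + h·g'/2 for g ∈ k[x²], h ∈ k[x] (where ' denotes the formal derivative with respect to x) is a secondary derivation of T with values in k[x]. In particular, the set of secondary derivations Der_k(T, k[x]) is nontrivial (contains a nonzero element). -/
open TensorProduct Polynomial

/-- The subalgebra `k[x²]` of `k[x]`. -/
noncomputable def evenSub (k : Type*) [Field k] : Subalgebra k (Polynomial k) :=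
  Algebra.adjoin k {(Polynomial.X ^ 2 : Polynomial k)}

noncomputable def secBil (k : Type*) [Field k] :
    evenSub k →ₗ[k] Polynomial k →ₗ[k] Polynomial k :=
  LinearMap.mk₂ k
    (fun g h => (g : Polynomial k) * derivative h + (1 / 2 : k) • (h * derivative (g : Polynomial k)))
    (by intro g g' h; push_cast; rw [derivative_add, mul_add, smul_add, add_mul]; ring)
    (by intro c g h; push_cast; simp [smul_smul, mul_comm, smul_add])
    (by intro g h h'; simp [derivative_add]; ring_nf
        simp [Polynomial.smul_eq_C_mul]; ring)
    (by intro c g h; simp [Polynomial.smul_eq_C_mul]; ring)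

lemma secBil_apply (k : Type*) [Field k] (g : evenSub k) (h : Polynomial k) :
    secBil k g h = (g : Polynomial k) * derivative h
      + (1 / 2 : k) • (h * derivative (g : Polynomial k)) := rfl

set_option maxHeartbeats 1000000 in
set_option synthInstance.maxHeartbeats 400000 in
/-- For the commutative triple `(k[x], k[x²], ι)`, the map
`D(g ⊗ h) = g·h' + h·g'/2` is a nonzero secondary derivation with values in `k[x]`. -/
theorem exists_nonzero_secondary_derivation_polynomial
    (k : Type*) [Field k] [CharZero k] :
    ∃ D : TensorProduct k (evenSub k) (Polynomial k) →ₗ[k] Polynomial k,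
      (∀ (g : evenSub k) (h : Polynomial k),
        D (g ⊗ₜ[k] h) =
          (g : Polynomial k) * derivative h + (1 / 2 : k) • (h * derivative (g : Polynomial k))) ∧
      (∀ (g₁ g₂ : evenSub k) (h₁ h₂ : Polynomial k),
        D ((g₁ ⊗ₜ[k] h₁) * (g₂ ⊗ₜ[k] h₂)) =
          (h₁ * (g₁ : Polynomial k)) • D (g₂ ⊗ₜ[k] h₂) +
            (h₂ * (g₂ : Polynomial k)) • D (g₁ ⊗ₜ[k] h₁)) ∧
      (∀ g : evenSub k,
        D (g ⊗ₜ[k] (1 : Polynomial k)) + D (g ⊗ₜ[k] (1 : Polynomial k)) =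
          D ((1 : evenSub k) ⊗ₜ[k] (g : Polynomial k))) ∧
      D ≠ 0 := by
  refine ⟨TensorProduct.lift (secBil k), ?_, ?_, ?_, ?_⟩
  · intro g h; simp [secBil_apply]
  · intro g₁ g₂ h₁ h₂
    have : (g₁ ⊗ₜ[k] h₁) * (g₂ ⊗ₜ[k] h₂) = (g₁ * g₂) ⊗ₜ[k] (h₁ * h₂) := by
      simp [Algebra.TensorProduct.tmul_mul_tmul]
    rw [this]
    simp only [TensorProduct.lift.tmul, secBil_apply, smul_eq_mul,
      Subalgebra.coe_mul, derivative_mul, Polynomial.smul_eq_C_mul]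
    ring
  · intro g
    simp only [TensorProduct.lift.tmul, secBil_apply, derivative_one,
      Subalgebra.coe_one, mul_zero, smul_zero, one_mul, add_zero, zero_add]
    rw [← add_smul]
    norm_num
  · intro h
    have : TensorProduct.lift (secBil k) ((1 : evenSub k) ⊗ₜ[k] (X : Polynomial k)) = 1 := by
      simp [secBil_apply]
    rw [h] at this
    simp at this
end

section
/- For any triple (A,B,ε), the composition ∂¹ ∘ ∂⁰ = 0, where ∂⁰ : Hom_k(A,k) → Hom_k(A⊗A⊗B,k) is given by (∂⁰f)(a⊗b⊗α) = f(aε(α)b) − f(bε(α)a), and ∂¹ : Hom_k(A⊗A⊗B,k) → Hom_k(A⊗A⊗A⊗B⊗B⊗B,k) is given by (∂¹f)(a⊗b⊗c⊗α⊗β⊗γ) = f(aε(α)b ⊗ c ⊗ βγ) − f(a ⊗ bε(γ)c ⊗ αβ) + f(cε(β)a ⊗ b ⊗ αγ). -/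
open TensorProduct

/-- For any triple `(A,B,ε)` (with `A` possibly noncommutative and
`ε(B) ⊆ Z(A)`), the composition `∂¹ ∘ ∂⁰` of the low-dimensional secondary Hochschild
coboundary maps is zero: applying `∂¹` to `∂⁰f` gives the zero functional. -/
theorem secondary_coboundary_comp_eq_zero
    (k A B : Type*) [Field k] [CharZero k]
    [Ring A] [CommRing B] [Algebra k A] [Algebra k B]
    (ε : B →ₐ[k] A) (hcent : ∀ (b : B) (a : A), ε b * a = a * ε b) :
    ∀ f : A →ₗ[k] k, ∀ (a b c : A) (α β γ : B),
      ((f ((a * ε α * b) * ε (β * γ) * c) - f (c * ε (β * γ) * (a * ε α * b)))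
        - (f (a * ε (α * β) * (b * ε γ * c)) - f ((b * ε γ * c) * ε (α * β) * a))
        + (f ((c * ε β * a) * ε (α * γ) * b) - f (b * ε (α * γ) * (c * ε β * a)))) = 0 := by
  intro f a b c α β γ
  have h : ∀ (x : B) (y z : A), y * ε x * z = y * z * ε x := fun x y z => by
    rw [mul_assoc, hcent, ← mul_assoc]
  have hm : ∀ (s t : B) (u : A), u * ε s * ε t = u * ε (s * t) := fun s t u => by
    rw [mul_assoc, ← map_mul]
  have e1 : (a * ε α * b) * ε (β * γ) * c = a * b * c * ε (α * (β * γ)) := by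
    rw [h α a b, h (β*γ) (a*b*ε α) c, h α (a*b) c, hm]
  have e2 : c * ε (β * γ) * (a * ε α * b) = c * (a * b) * ε (α * (β * γ)) := by
    rw [h α a b, ← mul_assoc, h (β*γ) c (a*b), hm, show (β*γ)*α = α*(β*γ) by ring]
  have e3 : a * ε (α * β) * (b * ε γ * c) = a * (b * c) * ε (α * (β * γ)) := by
    rw [h γ b c, ← mul_assoc, h (α*β) a (b*c), hm, show (α*β)*γ = α*(β*γ) by ring]
  have e4 : (b * ε γ * c) * ε (α * β) * a = b * c * a * ε (α * (β * γ)) := by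
    rw [h γ b c, h (α*β) (b*c*ε γ) a, h γ (b*c) a, hm, show γ*(α*β) = α*(β*γ) by ring]
  have e5 : (c * ε β * a) * ε (α * γ) * b = c * a * b * ε (α * (β * γ)) := by
    rw [h β c a, h (α*γ) (c*a*ε β) b, h β (c*a) b, hm, show β*(α*γ) = α*(β*γ) by ring]
  have e6 : b * ε (α * γ) * (c * ε β * a) = b * (c * a) * ε (α * (β * γ)) := by
    rw [h β c a, ← mul_assoc, h (α*γ) b (c*a), hm, show (α*γ)*β = α*(β*γ) by ring]
  rw [e1, e2, e3, e4, e5, e6, ← mul_assoc c a b, ← mul_assoc b c a, ← mul_assoc a b c]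
  ring
end

section
/- Let (A,B,ε) be a commutative triple and let f : A ⊗ A ⊗ B → k be a k-linear map (written f(a ⊗ b ⊗ α)) satisfying the secondary Hochschild 1-cocycle condition: f(aε(α)b ⊗ c ⊗ βγ) − f(a ⊗ bε(γ)c ⊗ αβ) + f(cε(β)a ⊗ b ⊗ αγ) = 0 for all a,b,c ∈ A and α,β,γ ∈ B. Then f satisfies: (1) f(a ⊗ bc ⊗ αβ) = f(abε(α) ⊗ c ⊗ β) + f(caε(β) ⊗ b ⊗ α), and (2) 2·f(a ⊗ 1 ⊗ γ) = f(a ⊗ ε(γ) ⊗ 1). -/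
open TensorProduct

/-- For a commutative triple `(A,B,ε)`, any secondary Hochschild 1-cocycle
`f : A ⊗ A ⊗ B → k` satisfies the two secondary-derivation relations. -/
theorem cocycle_implies_derivation_relations
    (k A B : Type*) [Field k] [CharZero k]
    [CommRing A] [CommRing B] [Algebra k A] [Algebra k B]
    (ε : B →ₐ[k] A)
    (f : TensorProduct k (TensorProduct k A A) B →ₗ[k] k)
    (hcocycle : ∀ (a b c : A) (α β γ : B),
      f (((a * ε α * b) ⊗ₜ[k] c) ⊗ₜ[k] (β * γ))
        - f ((a ⊗ₜ[k] (b * ε γ * c)) ⊗ₜ[k] (α * β))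
        + f (((c * ε β * a) ⊗ₜ[k] b) ⊗ₜ[k] (α * γ)) = 0) :
    (∀ (a b c : A) (α β : B),
      f ((a ⊗ₜ[k] (b * c)) ⊗ₜ[k] (α * β)) =
        f (((a * b * ε α) ⊗ₜ[k] c) ⊗ₜ[k] β) + f (((c * a * ε β) ⊗ₜ[k] b) ⊗ₜ[k] α)) ∧
    (∀ (a : A) (γ : B),
      2 * f ((a ⊗ₜ[k] (1 : A)) ⊗ₜ[k] γ) = f ((a ⊗ₜ[k] ε γ) ⊗ₜ[k] (1 : B))) := by
  constructor
  · intro a b c α β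
    have h := hcocycle a b c α β 1
    simp only [map_one, mul_one, one_mul] at h
    have e1 : a * ε α * b = a * b * ε α := by ring
    have e2 : c * ε β * a = c * a * ε β := by ring
    rw [e1, e2] at h
    linear_combination -h
  · intro a γ
    have h := hcocycle a 1 1 1 1 γ
    simp only [map_one, mul_one, one_mul] at h
    linear_combination h
end

section
/- Let (A,B,ε) be a commutative triple and let f : A ⊗ A ⊗ B → k be a k-linear map satisfying: (1) f(a ⊗ bc ⊗ αβ) = f(abε(α) ⊗ c ⊗ β) + f(caε(β) ⊗ b ⊗ α) for all a,b,c ∈ A, α,β ∈ B, and (2) 2·f(a ⊗ 1 ⊗ γ) = f(a ⊗ ε(γ) ⊗ 1) for all a ∈ A, γ ∈ B. Then f satisfies the secondary Hochschild 1-cocycle condition: f(aε(α)b ⊗ c ⊗ βγ) − f(a ⊗ bε(γ)c ⊗ αβ) + f(cε(β)a ⊗ b ⊗ αγ) = 0 for all a,b,c ∈ A, α,β,γ ∈ B. -/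
open TensorProduct

/-- For a commutative triple `(A,B,ε)`, any `k`-linear `f : A ⊗ A ⊗ B → k`
satisfying the two secondary-derivation relations is a secondary Hochschild 1-cocycle. -/
theorem derivation_relations_imply_cocycle
    (k A B : Type*) [Field k] [CharZero k]
    [CommRing A] [CommRing B] [Algebra k A] [Algebra k B]
    (ε : B →ₐ[k] A)
    (f : TensorProduct k (TensorProduct k A A) B →ₗ[k] k)
    (h1 : ∀ (a b c : A) (α β : B),
      f ((a ⊗ₜ[k] (b * c)) ⊗ₜ[k] (α * β)) =
        f (((a * b * ε α) ⊗ₜ[k] c) ⊗ₜ[k] β) + f (((c * a * ε β) ⊗ₜ[k] b) ⊗ₜ[k] α))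
    (h2 : ∀ (a : A) (γ : B),
      2 * f ((a ⊗ₜ[k] (1 : A)) ⊗ₜ[k] γ) = f ((a ⊗ₜ[k] ε γ) ⊗ₜ[k] (1 : B))) :
    ∀ (a b c : A) (α β γ : B),
      f (((a * ε α * b) ⊗ₜ[k] c) ⊗ₜ[k] (β * γ))
        - f ((a ⊗ₜ[k] (b * ε γ * c)) ⊗ₜ[k] (α * β))
        + f (((c * ε β * a) ⊗ₜ[k] b) ⊗ₜ[k] (α * γ)) = 0 := by
  intro a b c α β γ
  have e1 := h1 (a * ε α * b) c 1 β γ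
  have e2 := h1 a b (c * ε γ) α β
  have e3 := h1 (c * ε β * a) b 1 α γ
  have e4 := h1 (a * b * ε α) (ε γ) c 1 β
  have e5 := h2 (a * ε α * b * c * ε β) γ
  simp only [mul_one, one_mul, map_one] at e1 e2 e3 e4 e5
  ring_nf at e1 e2 e3 e4 e5 ⊢
  linear_combination e1 - e2 + e3 - e4 + e5
end

section
/- For a commutative triple T = (A,B,ε), the first secondary Hochschild cohomology HH¹(A,B,ε) is isomorphic as a k-vector space to the space of secondary derivations Der_k(T, A*), where A* = Hom_k(A, k) is viewed as a symmetric (B⊗A)-module via ((α⊗a)·φ)(x) = φ(aε(α)x). -/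
/-! Since `A` is commutative, `∂⁰ = 0`, so `HH¹(A,B,ε) = Ker ∂¹`. Currying a cochain `f` to
`D(α ⊗ a)(x) = f(x ⊗ a ⊗ α)` identifies cochains with maps `B ⊗ A → A*`. The cocycle identity at
`γ = 1` is the Leibniz rule for `D`, and at `b = c = α = β = 1` it is `2 D(γ ⊗ 1) = D(1 ⊗ ε γ)`;
conversely, the Leibniz rule reduces the cocycle identity to this second condition. -/

open TensorProduct

section

variable (k A B : Type*) [Field k] [CharZero k]
  [CommRing A] [CommRing B] [Algebra k A] [Algebra k B] (ε : B →ₐ[k] A)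

/-- The secondary Hochschild 1-cocycles: the kernel of `∂¹` inside
`C̄¹ = Hom_k(A ⊗ A ⊗ B, k)`. -/
def secondaryZ1 : Submodule k (TensorProduct k (TensorProduct k A A) B →ₗ[k] k) where
  carrier := {f | ∀ (a b c : A) (α β γ : B),
    f (((a * ε α * b) ⊗ₜ[k] c) ⊗ₜ[k] (β * γ))
      - f ((a ⊗ₜ[k] (b * ε γ * c)) ⊗ₜ[k] (α * β))
      + f (((c * ε β * a) ⊗ₜ[k] b) ⊗ₜ[k] (α * γ)) = 0}
  add_mem' := by
    intro f g hf hg a b c α β γ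
    simp only [LinearMap.add_apply]
    linear_combination hf a b c α β γ + hg a b c α β γ
  zero_mem' := by intro a b c α β γ; simp
  smul_mem' := by
    intro r f hf a b c α β γ
    simp only [LinearMap.smul_apply, smul_eq_mul]
    linear_combination r * hf a b c α β γ

/-- The secondary Hochschild 1-coboundaries: the image of `∂⁰` inside
`C̄¹ = Hom_k(A ⊗ A ⊗ B, k)`. -/
def secondaryB1 : Submodule k (TensorProduct k (TensorProduct k A A) B →ₗ[k] k) where
  carrier := {g | ∃ f : A →ₗ[k] k, ∀ (a b : A) (α : B),
    g ((a ⊗ₜ[k] b) ⊗ₜ[k] α) = f (a * ε α * b) - f (b * ε α * a)}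
  add_mem' := by
    rintro g₁ g₂ ⟨f₁, h₁⟩ ⟨f₂, h₂⟩
    refine ⟨f₁ + f₂, fun a b α => ?_⟩
    simp only [LinearMap.add_apply, h₁ a b α, h₂ a b α]
    ring
  zero_mem' := ⟨0, by simp⟩
  smul_mem' := by
    rintro r g ⟨f, h⟩
    refine ⟨r • f, fun a b α => ?_⟩
    simp only [LinearMap.smul_apply, h a b α, smul_eq_mul]
    ring

/-- The secondary derivations `D : B ⊗ A → A*`, where `A* = Hom_k(A,k)` carries the
symmetric `B ⊗ A`-module structure `((α⊗a)·φ)(x) = φ(aε(α)x)`. -/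
def secondaryDer : Submodule k (TensorProduct k B A →ₗ[k] (A →ₗ[k] k)) where
  carrier := {D |
    (∀ (α β : B) (a b x : A),
      D ((α ⊗ₜ[k] a) * (β ⊗ₜ[k] b)) x =
        D (β ⊗ₜ[k] b) (a * ε α * x) + D (α ⊗ₜ[k] a) (b * ε β * x)) ∧
    (∀ (α : B) (x : A),
      D (α ⊗ₜ[k] (1 : A)) x + D (α ⊗ₜ[k] (1 : A)) x = D ((1 : B) ⊗ₜ[k] ε α) x)}
  add_mem' := by
    rintro D₁ D₂ ⟨hL₁, hT₁⟩ ⟨hL₂, hT₂⟩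
    constructor
    · intro α β a b x
      simp only [LinearMap.add_apply]
      linear_combination hL₁ α β a b x + hL₂ α β a b x
    · intro α x
      simp only [LinearMap.add_apply]
      linear_combination hT₁ α x + hT₂ α x
  zero_mem' := by constructor <;> intros <;> simp
  smul_mem' := by
    rintro r D ⟨hL, hT⟩
    constructor
    · intro α β a b x
      simp only [LinearMap.smul_apply, smul_eq_mul]
      linear_combination r * hL α β a b x
    · intro α x
      simp only [LinearMap.smul_apply, smul_eq_mul]
      linear_combination r * hT α x

end

noncomputable def shuffleCurryEquiv (R M N P Q : Type*) [CommSemiring R]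
    [AddCommMonoid M] [AddCommMonoid N] [AddCommMonoid P] [AddCommMonoid Q]
    [Module R M] [Module R N] [Module R P] [Module R Q] :
    ((M ⊗[R] N) ⊗[R] P →ₗ[R] Q) ≃ₗ[R] (P ⊗[R] N →ₗ[R] M →ₗ[R] Q) :=
  let shuffle : (M ⊗[R] N) ⊗[R] P ≃ₗ[R] (P ⊗[R] N) ⊗[R] M :=
    TensorProduct.comm R _ P ≪≫ₗ TensorProduct.congr (LinearEquiv.refl R P)
      (TensorProduct.comm R M N) ≪≫ₗ (TensorProduct.assoc R P N M).symm
  shuffle.arrowCongr (LinearEquiv.refl R Q) ≪≫ₗ (TensorProduct.lift.equiv (.id R) _ M Q).symm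

@[simp]
lemma shuffleCurryEquiv_apply_tmul_apply {R M N P Q : Type*} [CommSemiring R]
    [AddCommMonoid M] [AddCommMonoid N] [AddCommMonoid P] [AddCommMonoid Q]
    [Module R M] [Module R N] [Module R P] [Module R Q]
    (f : (M ⊗[R] N) ⊗[R] P →ₗ[R] Q) (p : P) (n : N) (m : M) :
    shuffleCurryEquiv R M N P Q f (p ⊗ₜ n) m = f ((m ⊗ₜ n) ⊗ₜ p) := by
  simp [shuffleCurryEquiv, TensorProduct.lift.equiv_symm_apply, LinearEquiv.arrowCongr]

section

variable {k A B : Type*} [Field k] [CommRing A] [CommRing B] [Algebra k A] [Algebra k B]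
  {ε : B →ₐ[k] A}

lemma secondaryB1_eq_bot : secondaryB1 k A B ε = ⊥ := by
  refine (Submodule.eq_bot_iff _).mpr ?_
  rintro g ⟨f, hf⟩
  refine TensorProduct.ext_threefold fun a b α => ?_
  rw [hf, LinearMap.zero_apply, sub_eq_zero]
  ring_nf

lemma shuffleCurryEquiv_mem_secondaryDer {f : (A ⊗[k] A) ⊗[k] B →ₗ[k] k}
    (hf : f ∈ secondaryZ1 k A B ε) : shuffleCurryEquiv k A A B k f ∈ secondaryDer k A B ε := by
  constructor
  · intro α β a b x
    have h := hf x a b α β 1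
    simp only [map_one, mul_one] at h
    simp only [Algebra.TensorProduct.tmul_mul_tmul, shuffleCurryEquiv_apply_tmul_apply]
    linear_combination (norm := ring_nf) -h
  · intro α x
    have h := hf x 1 1 1 1 α
    simp only [map_one, mul_one, one_mul] at h
    simp only [shuffleCurryEquiv_apply_tmul_apply]
    linear_combination (norm := ring_nf) h

lemma mem_secondaryZ1_of_shuffleCurryEquiv_mem {f : (A ⊗[k] A) ⊗[k] B →ₗ[k] k}
    (hD : shuffleCurryEquiv k A A B k f ∈ secondaryDer k A B ε) : f ∈ secondaryZ1 k A B ε := by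
  obtain ⟨hLeibniz, hTwice⟩ := hD
  have leibniz (α β : B) (a b x : A) : f ((x ⊗ₜ (a * b)) ⊗ₜ (α * β)) =
      f (((a * ε α * x) ⊗ₜ b) ⊗ₜ β) + f (((b * ε β * x) ⊗ₜ a) ⊗ₜ α) := by
    simpa only [Algebra.TensorProduct.tmul_mul_tmul, shuffleCurryEquiv_apply_tmul_apply]
      using hLeibniz α β a b x
  have twice (α : B) (x : A) : 2 * f ((x ⊗ₜ 1) ⊗ₜ α) = f ((x ⊗ₜ ε α) ⊗ₜ 1) := by
    simpa only [shuffleCurryEquiv_apply_tmul_apply, ← two_mul] using hTwice α x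
  intro a b c α β γ
  -- The Leibniz rule reduces the cocycle expression to `2 F(X,1,γ) - F(X,ε γ,1)`, where
  -- `F(x,a,α) = f((x ⊗ a) ⊗ α)` and `X = a b c ε(α) ε(β)`; this vanishes by `twice`.
  have E1 := leibniz β γ c 1 (a * ε α * b)
  have E2 := leibniz α β b (ε γ * c) a
  have E3 := leibniz α γ b 1 (c * ε β * a)
  have E4 := leibniz 1 β (ε γ) c (b * ε α * a)
  have E5 := twice γ (c * ε β * a * ε α * b)
  simp only [map_one, mul_one, one_mul] at E1 E2 E3 E4
  linear_combination (norm := ring_nf) E1 - E2 + E3 - E4 + E5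

lemma map_shuffleCurryEquiv_secondaryZ1 :
    (secondaryZ1 k A B ε).map (shuffleCurryEquiv k A A B k : _ →ₗ[k] _) =
      secondaryDer k A B ε := by
  ext D
  rw [Submodule.mem_map_equiv]
  refine ⟨fun h => by simpa using shuffleCurryEquiv_mem_secondaryDer h, fun h => ?_⟩
  exact mem_secondaryZ1_of_shuffleCurryEquiv_mem (by simpa using h)

end

section

variable (k A B : Type*) [Field k] [CharZero k]
  [CommRing A] [CommRing B] [Algebra k A] [Algebra k B] (ε : B →ₐ[k] A)

/-- For a commutative triple `(A,B,ε)`, the first secondary Hochschild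
cohomology `HH¹(A,B,ε) = Ker ∂¹ / Im ∂⁰` is isomorphic, as a `k`-vector space, to the
space of secondary derivations `Der_k(T, A*)`. -/
theorem secondary_HH1_iso_secondary_derivations :
    Nonempty
      ((@HasQuotient.Quotient (secondaryZ1 k A B ε) _ (Submodule.hasQuotient (R := k))
          (Submodule.comap (secondaryZ1 k A B ε).subtype (secondaryB1 k A B ε)))
        ≃ₗ[k] secondaryDer k A B ε) := by
  have coboundaries_eq_bot :
      Submodule.comap (secondaryZ1 k A B ε).subtype (secondaryB1 k A B ε) = ⊥ := by
    rw [secondaryB1_eq_bot, Submodule.comap_bot, Submodule.ker_subtype]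
  exact ⟨Submodule.quotEquivOfEqBot _ coboundaries_eq_bot ≪≫ₗ
    (shuffleCurryEquiv k A A B k).ofSubmodules _ _ map_shuffleCurryEquiv_secondaryZ1⟩

end
end
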